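/- arXiv:1207.3397 — 2 statements merged into one kernel-verified Lean document; each statement's English description precedes it below -/
import Mathlib

section
/- For every complete k-partite graph H (with each part nonempty) and every positive integer d, bc_d(H) = bc_d(K_k). -/
open Finset

/-- `X, Y` form a biclique (complete bipartite subgraph) of `G`. -/
def SimpleGraph.IsBiclique {V : Type*} (G : SimpleGraph V) (X Y : Finset V) : Prop :=
  Disjoint X Y ∧ ∀ x ∈ X, ∀ y ∈ Y, G.Adj x y

/-- `L` is a `d`-biclique cover of `G`: a list (multiset, repetition allowed) of bicliques
covering every edge at least `d` times. -/
def SimpleGraph.IsBicliqueCover {V : Type*} [DecidableEq V] (G : SimpleGraph V) (d : ℕ)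
    (L : List (Finset V × Finset V)) : Prop :=
  (∀ p ∈ L, G.IsBiclique p.1 p.2) ∧
  ∀ e ∈ G.edgeSet, d ≤ L.countP (fun p => decide (∃ x ∈ p.1, ∃ y ∈ p.2, e = s(x, y)))

/-- The `d`-biclique covering number `bc_d(G)`. -/
noncomputable def SimpleGraph.bcd {V : Type*} [DecidableEq V] (G : SimpleGraph V) (d : ℕ) : ℕ :=
  sInf {n | ∃ L, G.IsBicliqueCover d L ∧ L.length = n}

/-- `B(G)`: the maximum number of edges among the bicliques of `G`. -/
noncomputable def SimpleGraph.bicliqueMax {V : Type*} (G : SimpleGraph V) : ℕ :=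
  sSup {n | ∃ X Y, G.IsBiclique X Y ∧ n = X.card * Y.card}
/-- The join of a family of graphs: disjoint copies of the `G i` together with all
edges between distinct copies. -/
def joinFam {ι : Type*} {V : ι → Type*} (G : ∀ i, SimpleGraph (V i)) :
    SimpleGraph (Σ i, V i) where
  Adj p q := p.1 ≠ q.1 ∨ ∃ (i : ι) (x y : V i), (G i).Adj x y ∧ p = ⟨i, x⟩ ∧ q = ⟨i, y⟩
  symm := by
    refine ⟨?_⟩
    rintro p q (h | ⟨i, x, y, hxy, rfl, rfl⟩)
    · exact Or.inl h.symm
    · exact Or.inr ⟨i, y, x, hxy.symm, rfl, rfl⟩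
  loopless := by
    refine ⟨?_⟩
    rintro p (h | ⟨i, x, y, hxy, rfl, h2⟩)
    · exact h rfl
    · obtain ⟨-, h3⟩ := Sigma.mk.inj_iff.mp h2
      exact hxy.ne (eq_of_heq h3)

lemma transfer_cover {V W : Type*} [DecidableEq V] [DecidableEq W]
    (G : SimpleGraph V) (G' : SimpleGraph W) (d : ℕ)
    (f : Finset V × Finset V → Finset W × Finset W)
    (hb : ∀ p, G.IsBiclique p.1 p.2 → G'.IsBiclique (f p).1 (f p).2)
    (hc : ∀ e' ∈ G'.edgeSet, ∃ e ∈ G.edgeSet, ∀ p : Finset V × Finset V,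
      (∃ x ∈ p.1, ∃ y ∈ p.2, e = s(x, y)) → (∃ x ∈ (f p).1, ∃ y ∈ (f p).2, e' = s(x, y)))
    (L : List (Finset V × Finset V)) (hL : G.IsBicliqueCover d L) :
    G'.IsBicliqueCover d (L.map f) := by
  constructor
  · rintro q hq
    obtain ⟨p, hp, rfl⟩ := List.mem_map.mp hq
    exact hb p (hL.1 p hp)
  · intro e' he'
    obtain ⟨e, he, himp⟩ := hc e' he'
    rw [List.countP_map]
    refine le_trans (hL.2 e he) (List.countP_mono_left ?_)
    intro p _ hp
    simp only [Function.comp_apply, decide_eq_true_eq] at *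
    exact himp p hp

lemma joinFam_bot_adj {k : ℕ} (V : Fin k → Type*)
    (p q : Σ i, V i) :
    (joinFam fun i => (⊥ : SimpleGraph (V i))).Adj p q ↔ p.1 ≠ q.1 := by
  constructor
  · rintro (h | ⟨i, x, y, hxy, -, -⟩)
    · exact h
    · exact absurd hxy (by simp)
  · exact Or.inl

theorem stmt_10 {k : ℕ} (V : Fin k → Type*) [∀ i, Fintype (V i)] [∀ i, DecidableEq (V i)]
    [∀ i, Nonempty (V i)] (d : ℕ) (hd : 0 < d) :
    (joinFam fun i => (⊥ : SimpleGraph (V i))).bcd d = (⊤ : SimpleGraph (Fin k)).bcd d := by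
  classical
  set H := joinFam fun i => (⊥ : SimpleGraph (V i)) with hH
  set K := (⊤ : SimpleGraph (Fin k)) with hK
  -- map from K-bicliques to H-bicliques
  set f : Finset (Fin k) × Finset (Fin k) → Finset (Σ i, V i) × Finset (Σ i, V i) :=
    fun p => (p.1.sigma fun _ => univ, p.2.sigma fun _ => univ) with hf
  -- map from H-bicliques to K-bicliques, using chosen representatives
  have hv : ∀ i, V i := fun i => Classical.arbitrary (V i)
  set g : Finset (Σ i, V i) × Finset (Σ i, V i) → Finset (Fin k) × Finset (Fin k) :=
    fun p => (univ.filter fun i => (⟨i, hv i⟩ : Σ i, V i) ∈ p.1,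
              univ.filter fun i => (⟨i, hv i⟩ : Σ i, V i) ∈ p.2) with hg
  have hfb : ∀ p, K.IsBiclique p.1 p.2 → H.IsBiclique (f p).1 (f p).2 := by
    rintro ⟨X, Y⟩ ⟨hdisj, hadj⟩
    constructor
    · rw [Finset.disjoint_left] at hdisj ⊢
      rintro ⟨i, x⟩ hx hy
      rw [Finset.mem_sigma] at hx hy
      exact hdisj hx.1 hy.1
    · rintro ⟨i, x⟩ hx ⟨j, y⟩ hy
      rw [Finset.mem_sigma] at hx hy
      exact (joinFam_bot_adj V _ _).mpr (hadj i hx.1 j hy.1).ne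
  have hgb : ∀ p, H.IsBiclique p.1 p.2 → K.IsBiclique (g p).1 (g p).2 := by
    rintro ⟨X, Y⟩ ⟨hdisj, hadj⟩
    constructor
    · rw [Finset.disjoint_left] at hdisj ⊢
      intro i hx hy
      rw [Finset.mem_filter] at hx hy
      exact hdisj hx.2 hy.2
    · intro i hi j hj
      rw [Finset.mem_filter] at hi hj
      have := (joinFam_bot_adj V _ _).mp (hadj _ hi.2 _ hj.2)
      simpa [hK] using this
  have hfc : ∀ e' ∈ H.edgeSet, ∃ e ∈ K.edgeSet, ∀ p : Finset (Fin k) × Finset (Fin k),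
      (∃ x ∈ p.1, ∃ y ∈ p.2, e = s(x, y)) → (∃ x ∈ (f p).1, ∃ y ∈ (f p).2, e' = s(x, y)) := by
    intro e' he'
    induction e' using Sym2.ind with
    | _ a b =>
      rw [SimpleGraph.mem_edgeSet] at he'
      have hab : a.1 ≠ b.1 := (joinFam_bot_adj V _ _).mp he'
      refine ⟨s(a.1, b.1), by simpa [hK, SimpleGraph.mem_edgeSet] using hab, ?_⟩
      rintro ⟨X, Y⟩ ⟨x, hx, y, hy, hxy⟩
      rcases Sym2.eq_iff.mp hxy with ⟨rfl, rfl⟩ | ⟨rfl, rfl⟩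
      · exact ⟨a, Finset.mem_sigma.mpr ⟨hx, Finset.mem_univ _⟩,
          b, Finset.mem_sigma.mpr ⟨hy, Finset.mem_univ _⟩, rfl⟩
      · exact ⟨b, Finset.mem_sigma.mpr ⟨hx, Finset.mem_univ _⟩,
          a, Finset.mem_sigma.mpr ⟨hy, Finset.mem_univ _⟩, Sym2.eq_swap⟩
  have hgc : ∀ e' ∈ K.edgeSet, ∃ e ∈ H.edgeSet, ∀ p : Finset (Σ i, V i) × Finset (Σ i, V i),
      (∃ x ∈ p.1, ∃ y ∈ p.2, e = s(x, y)) → (∃ x ∈ (g p).1, ∃ y ∈ (g p).2, e' = s(x, y)) := by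
    intro e' he'
    induction e' using Sym2.ind with
    | _ a b =>
      rw [SimpleGraph.mem_edgeSet] at he'
      have hab : a ≠ b := by simpa [hK] using he'
      refine ⟨s((⟨a, hv a⟩ : Σ i, V i), (⟨b, hv b⟩ : Σ i, V i)), ?_, ?_⟩
      · rw [SimpleGraph.mem_edgeSet]
        exact (joinFam_bot_adj V _ _).mpr (by simpa using hab)
      · rintro ⟨X, Y⟩ ⟨x, hx, y, hy, hxy⟩
        rcases Sym2.eq_iff.mp hxy with ⟨h1, h2⟩ | ⟨h1, h2⟩
        · subst h1; subst h2
          exact ⟨a, Finset.mem_filter.mpr ⟨Finset.mem_univ _, hx⟩,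
            b, Finset.mem_filter.mpr ⟨Finset.mem_univ _, hy⟩, rfl⟩
        · subst h1; subst h2
          exact ⟨b, Finset.mem_filter.mpr ⟨Finset.mem_univ _, hx⟩,
            a, Finset.mem_filter.mpr ⟨Finset.mem_univ _, hy⟩, Sym2.eq_swap⟩
  unfold SimpleGraph.bcd
  congr 1
  ext n
  constructor
  · rintro ⟨L, hL, rfl⟩
    exact ⟨L.map g, transfer_cover H K d g hgb hgc L hL, by simp⟩
  · rintro ⟨L, hL, rfl⟩
    exact ⟨L.map f, transfer_cover K H d f hfb hfc L hL, by simp⟩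
end

section
/- For every n > 4 and every positive integer d, bc_{2d}(M(C_n)) = 2dn, where M(C_n) is the Mycielski graph of the n-cycle. -/
open Finset

/-- The Mycielski graph `M(G)`: vertices `inl x` are the original vertices,
`inr (inl x')` are the twins, and `inr (inr ())` is the root `u`. -/
def mycielski {V : Type*} (G : SimpleGraph V) : SimpleGraph (V ⊕ V ⊕ Unit) where
  Adj p q :=
    match p, q with
    | .inl x, .inl y => G.Adj x y
    | .inl x, .inr (.inl y) => G.Adj x y
    | .inr (.inl x), .inl y => G.Adj x y
    | .inr (.inl _), .inr (.inr _) => True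
    | .inr (.inr _), .inr (.inl _) => True
    | _, _ => False
  symm := ⟨by
    rintro (x | x | x) (y | y | y) h <;> simp_all <;> exact h.symm⟩
  loopless := ⟨by
    rintro (x | x | x) h <;> simp_all⟩


section Aux

open SimpleGraph

variable {m : ℕ}

abbrev MV (m : ℕ) := Fin (m+5) ⊕ Fin (m+5) ⊕ Unit

lemma v1 : (1 : Fin (m+5)).val = 1 := by
  rw [Fin.val_one']; exact Nat.mod_eq_of_lt (by omega)
lemma v2 : ((1:Fin (m+5)) + 1).val = 2 := by
  rw [Fin.val_add, v1]; exact Nat.mod_eq_of_lt (by omega)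
lemma v3 : ((1:Fin (m+5)) + 1 + 1).val = 3 := by
  rw [Fin.val_add, v2, v1]; exact Nat.mod_eq_of_lt (by omega)
lemma v4 : ((1:Fin (m+5)) + 1 + 1 + 1).val = 4 := by
  rw [Fin.val_add, v3, v1]; exact Nat.mod_eq_of_lt (by omega)

lemma fin_one_ne_zero : (1 : Fin (m+5)) ≠ 0 := by
  intro h; have := congrArg Fin.val h; rw [v1] at this; simp at this
lemma fin2_ne_zero : ((1:Fin (m+5)) + 1) ≠ 0 := by
  intro h; have := congrArg Fin.val h; rw [v2] at this; simp at this
lemma fin4_ne_zero : ((1:Fin (m+5)) + 1 + 1 + 1) ≠ 0 := by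
  intro h; have := congrArg Fin.val h; rw [v4] at this; simp at this

lemma fin_add_ne (i c : Fin (m+5)) (hc : c ≠ 0) : i + c ≠ i :=
  fun h => hc (add_left_cancel (h.trans (add_zero i).symm))

lemma fin_ne_add_one (i : Fin (m+5)) : i ≠ i + 1 :=
  fun h => fin_add_ne i 1 fin_one_ne_zero h.symm

lemma fin_ne_sub_one (i : Fin (m+5)) : i ≠ i - 1 := by
  intro h
  have h2 : i + 1 = (i - 1) + 1 := by rw [← h]
  rw [sub_add_cancel] at h2
  exact fin_add_ne i 1 fin_one_ne_zero h2

lemma fin_sub_one_ne_add_one (x : Fin (m+5)) : x - 1 ≠ x + 1 := by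
  intro h
  have h2 : x + 1 + 1 = x := by rw [← h, sub_add_cancel]
  have h3 : x + (1+1) = x := by rw [show x + (1+1) = x + 1 + 1 from (add_assoc x 1 1).symm]; exact h2
  exact fin_add_ne x (1+1) fin2_ne_zero h3

lemma cyc_adj (u v : Fin (m+5)) :
    (SimpleGraph.cycleGraph (m+5)).Adj u v ↔ u = v + 1 ∨ v = u + 1 := by
  rw [SimpleGraph.cycleGraph_adj']
  have h1 : ∀ a b : Fin (m+5), (a - b).val = 1 ↔ a = b + 1 := by
    intro a b
    constructor
    · intro h
      have h2 : a - b = 1 := Fin.ext (by simpa using h)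
      rw [sub_eq_iff_eq_add] at h2
      rw [h2]; exact add_comm 1 b
    · intro h; subst h; simp [add_sub_cancel_left]
  rw [h1, h1]

/-- the bicliques of the first family -/
def Bb (m : ℕ) (i : Fin (m+5)) : Finset (MV m) × Finset (MV m) :=
  ({Sum.inl i, Sum.inr (Sum.inl i)}, {Sum.inl (i-1), Sum.inl (i+1)})

/-- the bicliques of the second family -/
def Cc (m : ℕ) (i : Fin (m+5)) : Finset (MV m) × Finset (MV m) :=
  ({Sum.inl i, Sum.inr (Sum.inr ())}, {Sum.inr (Sum.inl (i-1)), Sum.inr (Sum.inl (i+1))})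

lemma Bb_ne_Cc (i j : Fin (m+5)) : Bb m i ≠ Cc m j := by
  intro h
  have h1 : (Sum.inr (Sum.inr ()) : MV m) ∈ (Bb m i).1 := by rw [h]; simp [Cc]
  simp [Bb] at h1

lemma Bb_inj (i j : Fin (m+5)) (h : Bb m i = Bb m j) : i = j := by
  have h1 : (Sum.inl i : MV m) ∈ (Bb m j).1 := by rw [← h]; simp [Bb]
  simp [Bb] at h1; exact h1

lemma Cc_inj (i j : Fin (m+5)) (h : Cc m i = Cc m j) : i = j := by
  have h1 : (Sum.inl i : MV m) ∈ (Cc m j).1 := by rw [← h]; simp [Cc]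
  simp [Cc] at h1; exact h1

lemma Bb_isBiclique (i : Fin (m+5)) :
    (mycielski (SimpleGraph.cycleGraph (m+5))).IsBiclique (Bb m i).1 (Bb m i).2 := by
  constructor
  · simp only [Bb, Finset.disjoint_left, Finset.mem_insert, Finset.mem_singleton]
    rintro a (rfl | rfl) h <;>
      simp_all [fin_ne_sub_one i, fin_ne_add_one i]
  · simp only [Bb, Finset.mem_insert, Finset.mem_singleton]
    rintro x (rfl | rfl) y (rfl | rfl) <;>
      simp [mycielski, cyc_adj, sub_add_cancel]

lemma Cc_isBiclique (i : Fin (m+5)) :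
    (mycielski (SimpleGraph.cycleGraph (m+5))).IsBiclique (Cc m i).1 (Cc m i).2 := by
  constructor
  · simp [Cc, Finset.disjoint_left]
  · simp only [Cc, Finset.mem_insert, Finset.mem_singleton]
    rintro x (rfl | rfl) y (rfl | rfl) <;>
      simp [mycielski, cyc_adj, sub_add_cancel]

/-- the base list of 2(m+5) bicliques -/
def L0 (m : ℕ) : List (Finset (MV m) × Finset (MV m)) :=
  (List.finRange (m+5)).flatMap (fun i => [Bb m i, Cc m i])

lemma L0_length : (L0 m).length = 2 * (m+5) := by
  rw [L0, List.length_flatMap]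
  have h : ((List.finRange (m+5)).map (List.length ∘ fun i => [Bb m i, Cc m i]))
      = List.replicate (m+5) 2 := by
    simp [Function.comp_def, List.map_const', List.length_finRange]
  rw [show List.map (fun a => [Bb m a, Cc m a].length) (List.finRange (m + 5)) = _ from h,
    List.sum_replicate, smul_eq_mul]
  ring

lemma mem_L0 {p : Finset (MV m) × Finset (MV m)} (hp : p ∈ L0 m) :
    ∃ i, p = Bb m i ∨ p = Cc m i := by
  simp only [L0, List.mem_flatMap, List.mem_finRange, true_and] at hp
  obtain ⟨i, hi⟩ := hp
  simp only [List.mem_cons, List.mem_singleton, List.not_mem_nil, or_false] at hi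
  exact ⟨i, hi⟩

lemma Bb_mem_L0 (i : Fin (m+5)) : Bb m i ∈ L0 m := by
  simp only [L0, List.mem_flatMap]; exact ⟨i, List.mem_finRange i, by simp⟩

lemma Cc_mem_L0 (i : Fin (m+5)) : Cc m i ∈ L0 m := by
  simp only [L0, List.mem_flatMap]; exact ⟨i, List.mem_finRange i, by simp⟩

lemma two_le_countP {α : Type*} [DecidableEq α] (L : List α) (p : α → Bool) (a b : α)
    (hab : a ≠ b) (ha : a ∈ L) (hb : b ∈ L) (hpa : p a) (hpb : p b) :
    2 ≤ L.countP p := by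
  have h1 : a ∈ (L.filter p).toFinset := by simp [List.mem_filter, ha, hpa]
  have h2 : b ∈ (L.filter p).toFinset := by simp [List.mem_filter, hb, hpb]
  have h3 : ({a, b} : Finset α) ⊆ (L.filter p).toFinset := by
    intro x hx; simp at hx; rcases hx with rfl | rfl <;> assumption
  calc 2 = ({a, b} : Finset α).card := by
        rw [Finset.card_insert_of_notMem (by simpa using hab), Finset.card_singleton]
    _ ≤ (L.filter p).toFinset.card := Finset.card_le_card h3
    _ ≤ (L.filter p).length := List.toFinset_card_le _
    _ = L.countP p := List.countP_eq_length_filter.symm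

lemma countP_flatten_replicate {α : Type*} (d : ℕ) (L : List α) (p : α → Bool) :
    ((List.replicate d L).flatten).countP p = d * L.countP p := by
  induction d with
  | zero => simp
  | succ k ih => rw [List.replicate_succ, List.flatten_cons, List.countP_append, ih]; ring

lemma length_flatten_replicate {α : Type*} (d : ℕ) (L : List α) :
    ((List.replicate d L).flatten).length = d * L.length := by
  induction d with
  | zero => simp
  | succ k ih => rw [List.replicate_succ, List.flatten_cons, List.length_append, ih]; ring

lemma pred_true {e : Sym2 (MV m)} {p : Finset (MV m) × Finset (MV m)} {x y : MV m}
    (hx : x ∈ p.1) (hy : y ∈ p.2) (h : e = s(x,y) ∨ e = s(y,x)) :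
    (decide (∃ x ∈ p.1, ∃ y ∈ p.2, e = s(x,y))) = true := by
  rw [decide_eq_true_eq]
  refine ⟨x, hx, y, hy, ?_⟩
  rcases h with h | h
  · exact h
  · rw [h, Sym2.eq_swap]

lemma L0_covers {e : Sym2 (MV m)}
    (he : e ∈ (mycielski (SimpleGraph.cycleGraph (m+5))).edgeSet) :
    2 ≤ (L0 m).countP (fun p => decide (∃ x ∈ p.1, ∃ y ∈ p.2, e = s(x,y))) := by
  induction e using Sym2.ind with
  | _ a b =>
  rw [SimpleGraph.mem_edgeSet] at he
  rcases a with x | x | x <;> rcases b with y | y | y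
  -- inl inl : cycle edge
  · replace he : (SimpleGraph.cycleGraph (m+5)).Adj x y := he
    rw [cyc_adj] at he
    rcases he with rfl | rfl
    · refine two_le_countP _ _ (Bb m y) (Bb m (y+1))
        (fun h => fin_ne_add_one y (Bb_inj _ _ h)) (Bb_mem_L0 _) (Bb_mem_L0 _)
        (pred_true (x := Sum.inl y) (y := Sum.inl (y+1)) (by simp [Bb]) (by simp [Bb])
          (Or.inr rfl))
        (pred_true (x := Sum.inl (y+1)) (y := Sum.inl y) (by simp [Bb])
          (by simp [Bb, add_sub_cancel_right]) (Or.inl rfl))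
    · refine two_le_countP _ _ (Bb m x) (Bb m (x+1))
        (fun h => fin_ne_add_one x (Bb_inj _ _ h)) (Bb_mem_L0 _) (Bb_mem_L0 _)
        (pred_true (x := Sum.inl x) (y := Sum.inl (x+1)) (by simp [Bb]) (by simp [Bb])
          (Or.inl rfl))
        (pred_true (x := Sum.inl (x+1)) (y := Sum.inl x) (by simp [Bb])
          (by simp [Bb, add_sub_cancel_right]) (Or.inr rfl))
  -- inl x, inr (inl y) : cross edge
  · replace he : (SimpleGraph.cycleGraph (m+5)).Adj x y := he
    rw [cyc_adj] at he
    rcases he with rfl | rfl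
    · refine two_le_countP _ _ (Bb m y) (Cc m (y+1)) (Bb_ne_Cc _ _)
        (Bb_mem_L0 _) (Cc_mem_L0 _)
        (pred_true (x := Sum.inr (Sum.inl y)) (y := Sum.inl (y+1)) (by simp [Bb])
          (by simp [Bb]) (Or.inr rfl))
        (pred_true (x := Sum.inl (y+1)) (y := Sum.inr (Sum.inl y)) (by simp [Cc])
          (by simp [Cc, add_sub_cancel_right]) (Or.inl rfl))
    · refine two_le_countP _ _ (Bb m (x+1)) (Cc m x) (Bb_ne_Cc _ _)
        (Bb_mem_L0 _) (Cc_mem_L0 _)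
        (pred_true (x := Sum.inr (Sum.inl (x+1))) (y := Sum.inl x) (by simp [Bb])
          (by simp [Bb, add_sub_cancel_right]) (Or.inr rfl))
        (pred_true (x := Sum.inl x) (y := Sum.inr (Sum.inl (x+1))) (by simp [Cc])
          (by simp [Cc]) (Or.inl rfl))
  -- inl x, inr (inr y) : non-edge
  · exact (he : False).elim
  -- inr (inl x), inl y : cross edge reversed
  · replace he : (SimpleGraph.cycleGraph (m+5)).Adj x y := he
    rw [cyc_adj] at he
    rcases he with rfl | rfl
    · refine two_le_countP _ _ (Bb m (y+1)) (Cc m y) (Bb_ne_Cc _ _)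
        (Bb_mem_L0 _) (Cc_mem_L0 _)
        (pred_true (x := Sum.inr (Sum.inl (y+1))) (y := Sum.inl y) (by simp [Bb])
          (by simp [Bb, add_sub_cancel_right]) (Or.inl rfl))
        (pred_true (x := Sum.inl y) (y := Sum.inr (Sum.inl (y+1))) (by simp [Cc])
          (by simp [Cc]) (Or.inr rfl))
    · refine two_le_countP _ _ (Bb m x) (Cc m (x+1)) (Bb_ne_Cc _ _)
        (Bb_mem_L0 _) (Cc_mem_L0 _)
        (pred_true (x := Sum.inr (Sum.inl x)) (y := Sum.inl (x+1)) (by simp [Bb])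
          (by simp [Bb]) (Or.inl rfl))
        (pred_true (x := Sum.inl (x+1)) (y := Sum.inr (Sum.inl x)) (by simp [Cc])
          (by simp [Cc, add_sub_cancel_right]) (Or.inr rfl))
  -- inr (inl x), inr (inl y) : non-edge
  · exact (he : False).elim
  -- inr (inl x), inr (inr ()) : u-edge
  · refine two_le_countP _ _ (Cc m (x-1)) (Cc m (x+1))
      (fun h => fin_sub_one_ne_add_one x (Cc_inj _ _ h)) (Cc_mem_L0 _) (Cc_mem_L0 _)
      (pred_true (x := Sum.inr (Sum.inr ())) (y := Sum.inr (Sum.inl x)) (by simp [Cc])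
        (by simp [Cc, sub_add_cancel]) ?_)
      (pred_true (x := Sum.inr (Sum.inr ())) (y := Sum.inr (Sum.inl x)) (by simp [Cc])
        (by simp [Cc, add_sub_cancel_right]) ?_)
    · right; rcases y with ⟨⟩; rfl
    · right; rcases y with ⟨⟩; rfl
  -- inr (inr _), inl y : non-edge
  · exact (he : False).elim
  -- inr (inr ()), inr (inl y) : u-edge reversed
  · refine two_le_countP _ _ (Cc m (y-1)) (Cc m (y+1))
      (fun h => fin_sub_one_ne_add_one y (Cc_inj _ _ h)) (Cc_mem_L0 _) (Cc_mem_L0 _)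
      (pred_true (x := Sum.inr (Sum.inr ())) (y := Sum.inr (Sum.inl y)) (by simp [Cc])
        (by simp [Cc, sub_add_cancel]) ?_)
      (pred_true (x := Sum.inr (Sum.inr ())) (y := Sum.inr (Sum.inl y)) (by simp [Cc])
        (by simp [Cc, add_sub_cancel_right]) ?_)
    · left; rcases x with ⟨⟩; rfl
    · left; rcases x with ⟨⟩; rfl
  -- inr inr, inr inr : non-edge
  · exact (he : False).elim

lemma cover_unique (p : Finset (MV m) × Finset (MV m))
    (hb : (mycielski (SimpleGraph.cycleGraph (m+5))).IsBiclique p.1 p.2)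
    (i j : Fin (m+5))
    (hi : ∃ x ∈ p.1, ∃ y ∈ p.2, s(Sum.inl i, (Sum.inr (Sum.inl (i+1)) : MV m)) = s(x,y))
    (hj : ∃ x ∈ p.1, ∃ y ∈ p.2, s(Sum.inl j, (Sum.inr (Sum.inl (j+1)) : MV m)) = s(x,y)) :
    i = j := by
  obtain ⟨x, hx, y, hy, hxy⟩ := hi
  obtain ⟨x', hx', y', hy', hxy'⟩ := hj
  rw [Sym2.eq_iff] at hxy hxy'
  rcases hxy with ⟨h1, h2⟩ | ⟨h1, h2⟩ <;> rcases hxy' with ⟨h3, h4⟩ | ⟨h3, h4⟩ <;>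
    subst h1 <;> subst h2 <;> subst h3 <;> subst h4
  · have a1 : (SimpleGraph.cycleGraph (m+5)).Adj i (j+1) := hb.2 _ hx _ hy'
    have a2 : (SimpleGraph.cycleGraph (m+5)).Adj j (i+1) := hb.2 _ hx' _ hy
    rw [cyc_adj] at a1 a2
    rcases a1 with a1 | a1
    · rcases a2 with a2 | a2
      · exfalso
        subst a1
        exact fin_add_ne j (1+1+1+1) fin4_ne_zero
          ((show j + (1+1+1+1) = j + 1 + 1 + 1 + 1 by simp only [add_assoc]).trans a2.symm)
      · exact add_right_cancel a2
    · exact (add_right_cancel a1).symm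
  · exact ((hb.2 _ hx' _ hy : False)).elim
  · exact ((hb.2 _ hx _ hy' : False)).elim
  · have a1 : (SimpleGraph.cycleGraph (m+5)).Adj (i+1) j := hb.2 _ hx _ hy'
    have a2 : (SimpleGraph.cycleGraph (m+5)).Adj (j+1) i := hb.2 _ hx' _ hy
    rw [cyc_adj] at a1 a2
    rcases a1 with a1 | a1
    · exact add_right_cancel a1
    · rcases a2 with a2 | a2
      · exact (add_right_cancel a2).symm
      · exfalso
        subst a2
        exact fin_add_ne j (1+1+1+1) fin4_ne_zero
          ((show j + (1+1+1+1) = j + 1 + 1 + 1 + 1 by simp only [add_assoc]).trans a1.symm)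

lemma sum_countP_le {α : Type*} {N : ℕ} (L : List α) (P : Fin N → α → Bool)
    (hdisj : ∀ a ∈ L, ∀ i j, P i a → P j a → i = j) :
    ∑ i : Fin N, L.countP (P i) ≤ L.length := by
  induction L with
  | nil => simp
  | cons a l ih =>
    simp only [List.countP_cons, List.length_cons]
    rw [Finset.sum_add_distrib]
    have h1 : ∑ i : Fin N, (if P i a then 1 else 0) ≤ 1 := by
      have hcard : (Finset.univ.filter (fun i : Fin N => P i a)).card ≤ 1 :=
        Finset.card_le_one.mpr (fun i hi j hj =>
          hdisj a List.mem_cons_self i j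
            (by simpa using (Finset.mem_filter.mp hi).2)
            (by simpa using (Finset.mem_filter.mp hj).2))
      calc ∑ i : Fin N, (if P i a then 1 else 0)
          = (Finset.univ.filter (fun i : Fin N => P i a)).card := by
            rw [Finset.sum_boole]; simp
        _ ≤ 1 := hcard
    have h2 := ih (fun b hb => hdisj b (List.mem_cons_of_mem a hb))
    omega

end Aux

theorem stmt_18 (n d : ℕ) (hn : 4 < n) (hd : 0 < d) :
    (mycielski (SimpleGraph.cycleGraph n)).bcd (2 * d) = 2 * d * n := by
  obtain ⟨m, rfl⟩ : ∃ m, n = m + 5 := ⟨n - 5, by omega⟩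
  rw [SimpleGraph.bcd]
  have hub : 2 * d * (m+5) ∈ {k | ∃ L,
      (mycielski (SimpleGraph.cycleGraph (m+5))).IsBicliqueCover (2*d) L ∧ L.length = k} := by
    refine ⟨(List.replicate d (L0 m)).flatten, ⟨?_, ?_⟩, ?_⟩
    · intro p hp
      rw [List.mem_flatten] at hp
      obtain ⟨l, hl, hpl⟩ := hp
      rw [List.mem_replicate] at hl
      rw [hl.2] at hpl
      obtain ⟨i, hi | hi⟩ := mem_L0 hpl
      · rw [hi]; exact Bb_isBiclique i
      · rw [hi]; exact Cc_isBiclique i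
    · intro e he
      rw [countP_flatten_replicate]
      calc 2 * d = d * 2 := by ring
        _ ≤ d * (L0 m).countP (fun p => decide (∃ x ∈ p.1, ∃ y ∈ p.2, e = s(x,y))) :=
            Nat.mul_le_mul_left d (L0_covers he)
    · rw [length_flatten_replicate, L0_length]; ring
  have hlb : ∀ k ∈ {k | ∃ L,
      (mycielski (SimpleGraph.cycleGraph (m+5))).IsBicliqueCover (2*d) L ∧ L.length = k},
      2 * d * (m+5) ≤ k := by
    rintro k ⟨L, ⟨hbic, hcov⟩, rfl⟩
    set P : Fin (m+5) → Finset (MV m) × Finset (MV m) → Bool :=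
      fun i p => decide (∃ x ∈ p.1, ∃ y ∈ p.2,
        s(Sum.inl i, (Sum.inr (Sum.inl (i+1)) : MV m)) = s(x,y)) with hP
    have h1 : ∀ i : Fin (m+5), 2 * d ≤ L.countP (P i) := by
      intro i
      exact hcov s(Sum.inl i, Sum.inr (Sum.inl (i+1)))
        (by rw [SimpleGraph.mem_edgeSet]; exact (cyc_adj i (i+1)).mpr (Or.inr rfl))
    have h2 : ∑ i : Fin (m+5), L.countP (P i) ≤ L.length := by
      refine sum_countP_le L P (fun p hp i j hi hj => ?_)
      refine cover_unique p (hbic p hp) i j ?_ ?_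
      · rw [hP] at hi; simpa using of_decide_eq_true hi
      · rw [hP] at hj; simpa using of_decide_eq_true hj
    calc 2 * d * (m+5) = ∑ _i : Fin (m+5), 2 * d := by
          rw [Finset.sum_const, Finset.card_univ, Fintype.card_fin, smul_eq_mul]; ring
      _ ≤ ∑ i : Fin (m+5), L.countP (P i) := Finset.sum_le_sum (fun i _ => h1 i)
      _ ≤ L.length := h2
  exact le_antisymm (Nat.sInf_le hub) (hlb _ (Nat.sInf_mem ⟨_, hub⟩))
end
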